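/- arXiv:2604.22736 — 2 statements merged into one kernel-verified Lean document; each statement's English description precedes it below -/
import Mathlib

section
/- If two epistemic states s1 and s2 are bisimilar, then for every epistemic action a that applies to s1, a also applies to s2 and the product updates s1 × a and s2 × a are bisimilar. -/
/-- Modal formulas over a set of agents, atoms indexed by ℕ. -/
inductive Form (Agent : Type) : Type
  | falsum : Form Agent
  | atom : ℕ → Form Agent
  | neg : Form Agent → Form Agent
  | conj : Form Agent → Form Agent → Form Agent
  | know : Agent → Form Agent → Form Agent

/-- A Kripke model: accessibility relations and valuation. -/
structure KripkeModel (Agent : Type) (W : Type) where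
  R : Agent → W → W → Prop
  V : W → ℕ → Prop

/-- Satisfaction of a modal formula at a world. -/
def KripkeModel.sat {Agent W : Type} (M : KripkeModel Agent W) : W → Form Agent → Prop
  | _, .falsum => False
  | w, .atom p => M.V w p
  | w, .neg φ => ¬ M.sat w φ
  | w, .conj φ ψ => M.sat w φ ∧ M.sat w ψ
  | w, .know i φ => ∀ v, M.R i w v → M.sat v φ

/-- An event model: pointedless Kripke frame with preconditions on events. -/
structure EventModel (Agent : Type) (E : Type) where
  Q : Agent → E → E → Prop
  pre : E → Form Agent

/-- The product update of a Kripke model with an event model: worlds are the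
pairs surviving the preconditions, accessibility is componentwise, valuation
is inherited. -/
def productModel {Agent W E : Type} (M : KripkeModel Agent W) (A : EventModel Agent E) :
    KripkeModel Agent {p : W × E // M.sat p.1 (A.pre p.2)} where
  R i x y := M.R i x.1.1 y.1.1 ∧ A.Q i x.1.2 y.1.2
  V x n := M.V x.1.1 n

/-- An epistemic state: a pointed Kripke model. -/
structure EpiState (Agent : Type) where
  W : Type
  M : KripkeModel Agent W
  w : W

/-- An epistemic action: a pointed event model. -/
structure EpiAction (Agent : Type) where
  E : Type
  A : EventModel Agent E
  e : E

/-- An action applies to a state when the designated event's precondition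
holds at the designated world. -/
def EpiAction.applies {Agent : Type} (a : EpiAction Agent) (s : EpiState Agent) : Prop :=
  s.M.sat s.w (a.A.pre a.e)

/-- The product update of an epistemic state by an applicable epistemic action. -/
def EpiState.update {Agent : Type} (s : EpiState Agent) (a : EpiAction Agent) (h : a.applies s) :
    EpiState Agent where
  W := {p : s.W × a.E // s.M.sat p.1 (a.A.pre p.2)}
  M := productModel s.M a.A
  w := ⟨(s.w, a.e), h⟩

/-- `Exec s α t` : the sequence of actions `α` applies (left to right) to `s`
and results in `t`. -/
inductive Exec {Agent : Type} : EpiState Agent → List (EpiAction Agent) → EpiState Agent → Prop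
  | nil (s : EpiState Agent) : Exec s [] s
  | snoc {s t : EpiState Agent} {α : List (EpiAction Agent)} (a : EpiAction Agent)
      (hst : Exec s α t) (h : a.applies t) : Exec s (α ++ [a]) (t.update a h)

/-- `Z` is a bisimulation between `M` and `M'`. -/
def Bisim {Agent W W' : Type} (M : KripkeModel Agent W) (M' : KripkeModel Agent W')
    (Z : W → W' → Prop) : Prop :=
  ∀ w w', Z w w' →
    (∀ p, M.V w p ↔ M'.V w' p) ∧
    (∀ i v, M.R i w v → ∃ v', M'.R i w' v' ∧ Z v v') ∧
    (∀ i v', M'.R i w' v' → ∃ v, M.R i w v ∧ Z v v')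

/-- Two pointed models are bisimilar. -/
def Bisimilar {Agent : Type} (s t : EpiState Agent) : Prop :=
  ∃ Z : s.W → t.W → Prop, Bisim s.M t.M Z ∧ Z s.w t.w

/-- A formula is propositional (modal depth 0). -/
def Form.IsProp {Agent : Type} : Form Agent → Prop
  | .falsum => True
  | .atom _ => True
  | .neg φ => φ.IsProp
  | .conj φ ψ => φ.IsProp ∧ ψ.IsProp
  | .know _ _ => False

/-- Modal depth of a formula. -/
def Form.depth {Agent : Type} : Form Agent → ℕ
  | .falsum => 0
  | .atom _ => 0
  | .neg φ => φ.depth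
  | .conj φ ψ => max φ.depth ψ.depth
  | .know _ φ => φ.depth + 1

/-- The submodel of a state induced by a set of worlds containing the point. -/
def EpiState.sub {Agent : Type} (s : EpiState Agent) (S : Set s.W) (h : s.w ∈ S) : EpiState Agent where
  W := S
  M := { R := fun i x y => s.M.R i x.1 y.1, V := fun x n => s.M.V x.1 n }
  w := ⟨s.w, h⟩

namespace Bisim

variable {Agent W W' : Type} {M : KripkeModel Agent W} {M' : KripkeModel Agent W'}
  {Z : W → W' → Prop}

theorem sat_iff (hZ : Bisim M M' Z) (φ : Form Agent) {w : W} {w' : W'} (h : Z w w') :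
    M.sat w φ ↔ M'.sat w' φ := by
  induction φ generalizing w w' with
  | falsum => rfl
  | atom p => exact (hZ w w' h).1 p
  | neg φ ih => exact not_congr (ih h)
  | conj φ ψ ihφ ihψ => exact and_congr (ihφ h) (ihψ h)
  | know i φ ih =>
    constructor
    · intro hs v' hr
      obtain ⟨v, hv, hz⟩ := (hZ w w' h).2.2 i v' hr
      exact (ih hz).mp (hs v hv)
    · intro hs v hr
      obtain ⟨v', hv', hz⟩ := (hZ w w' h).2.1 i v hr
      exact (ih hz).mpr (hs v' hv')

/-- Since bisimilar worlds satisfy the same preconditions, pairing them with a common event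
keeps both pairs in the product. -/
theorem productModel (hZ : Bisim M M' Z) {E : Type} (A : EventModel Agent E) :
    Bisim (_root_.productModel M A) (_root_.productModel M' A)
      (fun x y => Z x.1.1 y.1.1 ∧ x.1.2 = y.1.2) := by
  rintro ⟨⟨u, e⟩, _⟩ ⟨⟨u', e'⟩, _⟩ ⟨hz, rfl : e = e'⟩
  refine ⟨(hZ u u' hz).1, ?_, ?_⟩
  · rintro i ⟨⟨v, f⟩, hv⟩ ⟨hR, hQ⟩
    obtain ⟨v', hR', hz'⟩ := (hZ u u' hz).2.1 i v hR
    exact ⟨⟨(v', f), (hZ.sat_iff _ hz').mp hv⟩, ⟨hR', hQ⟩, hz', rfl⟩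
  · rintro i ⟨⟨v', f⟩, hv'⟩ ⟨hR', hQ⟩
    obtain ⟨v, hR, hz'⟩ := (hZ u u' hz).2.2 i v' hR'
    exact ⟨⟨(v, f), (hZ.sat_iff _ hz').mpr hv'⟩, ⟨hR, hQ⟩, hz', rfl⟩

end Bisim

/-- If `s` and `t` are bisimilar and an action `a` applies to
`s`, then `a` applies to `t` and the product updates are bisimilar. -/
theorem bisimilar_update {Agent : Type} (s t : EpiState Agent)
    (hb : Bisimilar s t) (a : EpiAction Agent) (hs : a.applies s) :
    ∃ ht : a.applies t, Bisimilar (s.update a hs) (t.update a ht) := by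
  obtain ⟨Z, hZ, hzw⟩ := hb
  have ht : a.applies t := (hZ.sat_iff _ hzw).mp hs
  exact ⟨ht, _, hZ.productModel a.A, hzw, rfl⟩
end

section
/- The satisfiability problem SAT for propositional logic reduces in polynomial time to the single-agent S5 plan existence problem with modal-depth-1 preconditions and no postconditions; hence the latter problem is NP-hard. -/
/-- Propositional evaluation of a formula under an assignment. -/
def propEval {Agent : Type} (v : ℕ → Prop) : Form Agent → Prop
  | .falsum => False
  | .atom p => v p
  | .neg φ => ¬ propEval v φ
  | .conj φ ψ => propEval v φ ∧ propEval v ψ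
  | .know _ φ => propEval v φ

/-- The atoms occurring in a formula. -/
def Form.atoms {Agent : Type} : Form Agent → Finset ℕ
  | .falsum => ∅
  | .atom p => {p}
  | .neg φ => φ.atoms
  | .conj φ ψ => φ.atoms ∪ ψ.atoms
  | .know _ φ => φ.atoms

/-- The translation replacing each atom `p` by `¬K¬p`. -/
def satTrans : Form Unit → Form Unit
  | .falsum => .falsum
  | .atom p => .neg (.know () (.neg (.atom p)))
  | .neg φ => .neg (satTrans φ)
  | .conj φ ψ => .conj (satTrans φ) (satTrans ψ)
  | .know i φ => .know i (satTrans φ)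

/-- The initial S5 state of the SAT reduction: worlds `{0} ∪ P`
(world `none` is the extra world `0`), total accessibility, atom `p` true
exactly at world `p`, designated world `0`. -/
def satInit (P : Finset ℕ) : EpiState Unit where
  W := Option {p : ℕ // p ∈ P}
  M := { R := fun _ _ _ => True,
         V := fun w q => ∃ hq : q ∈ P, w = some ⟨q, hq⟩ }
  w := none

/-- The single-event self-loop S5 action deleting world `p`
(precondition `¬p`). -/
def delAction (p : ℕ) : EpiAction Unit where
  E := Unit
  A := { Q := fun _ _ _ => True, pre := fun _ => .neg (.atom p) }
  e := ()

/-!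
In a model where every world sees every other, `¬K¬p` holds anywhere iff some world
satisfies `p`, so `satTrans φ` holds iff `φ` holds under the assignment "`p` is true
iff some world still satisfies `p`". In the initial state each atom of `P` lives at its own
world and the designated world carries none, so deleting world `p` removes exactly the
atom `p`: the plans reach precisely the assignments on `P`.
-/

lemma propEval_congr {Agent : Type} {v v' : ℕ → Prop} (ψ : Form Agent)
    (h : ∀ q ∈ ψ.atoms, (v q ↔ v' q)) : propEval v ψ ↔ propEval v' ψ := by
  induction ψ with
  | falsum => exact Iff.rfl
  | atom p => exact h p (by simp [Form.atoms])
  | neg φ ih => exact not_congr (ih h)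
  | conj φ ψ ih₁ ih₂ =>
      exact and_congr (ih₁ fun q hq => h q (by simp [Form.atoms, hq]))
        (ih₂ fun q hq => h q (by simp [Form.atoms, hq]))
  | know i φ ih => exact ih h

lemma KripkeModel.sat_satTrans_iff {W : Type} (M : KripkeModel Unit W)
    (htot : ∀ x y, M.R () x y) {ψ : Form Unit} (hψ : ψ.IsProp) (w : W) :
    M.sat w (satTrans ψ) ↔ propEval (fun q => ∃ u, M.V u q) ψ := by
  induction ψ with
  | falsum => exact Iff.rfl
  | atom p => simp [satTrans, KripkeModel.sat, propEval, htot]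
  | neg φ ih => exact not_congr (ih hψ)
  | conj φ ψ ih₁ ih₂ => exact and_congr (ih₁ hψ.1) (ih₂ hψ.2)
  | know i φ ih => exact hψ.elim

lemma Exec.rel_total {Agent : Type} {s t : EpiState Agent} {α : List (EpiAction Agent)}
    (he : Exec s α t) (hs : ∀ i x y, s.M.R i x y) (hα : ∀ a ∈ α, ∀ i e f, a.A.Q i e f) :
    ∀ i x y, t.M.R i x y := by
  induction he with
  | nil => exact hs
  | snoc a _ _ ih =>
      exact fun i x y =>
        ⟨ih (fun b hb => hα b (by simp [hb])) i x.1.1 y.1.1, hα a (by simp) i x.1.2 y.1.2⟩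

structure EpiState.UniqueAtoms {Agent : Type} (t : EpiState Agent) : Prop where
  point_atomless : ∀ q, ¬ t.M.V t.w q
  eq_of_val : ∀ u q q', t.M.V u q → t.M.V u q' → q = q'

lemma satInit_uniqueAtoms (P : Finset ℕ) : (satInit P).UniqueAtoms where
  point_atomless := fun _ ⟨_, h⟩ => Option.some_ne_none _ h.symm
  eq_of_val := by
    rintro u q q' ⟨_, rfl⟩ ⟨_, h⟩
    exact congrArg Subtype.val (Option.some.inj h)

section delAction

variable {t : EpiState Unit} {p : ℕ}

lemma EpiState.UniqueAtoms.update_delAction (ht : t.UniqueAtoms)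
    (h : (delAction p).applies t) : (t.update (delAction p) h).UniqueAtoms where
  point_atomless := ht.point_atomless
  eq_of_val u := ht.eq_of_val u.1.1

lemma EpiState.UniqueAtoms.exists_val_update_delAction_iff (ht : t.UniqueAtoms)
    (h : (delAction p).applies t) (q : ℕ) :
    (∃ u, (t.update (delAction p) h).M.V u q) ↔ (∃ u, t.M.V u q) ∧ q ≠ p := by
  constructor
  · rintro ⟨⟨⟨u, _⟩, hup⟩, hq⟩
    exact ⟨⟨u, hq⟩, fun hqp => hup (hqp ▸ hq)⟩
  · rintro ⟨⟨u, hu⟩, hqp⟩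
    exact ⟨⟨⟨u, ()⟩, fun hup => hqp (ht.eq_of_val u q p hu hup)⟩, hu⟩

end delAction

lemma exists_exec_delAction_satInit (P : Finset ℕ) (l : List ℕ) :
    ∃ t, Exec (satInit P) (l.map delAction) t ∧ t.UniqueAtoms ∧
      ∀ q, (∃ u, t.M.V u q) ↔ q ∈ P ∧ q ∉ l := by
  induction l using List.reverseRecOn with
  | nil =>
      refine ⟨satInit P, Exec.nil _, satInit_uniqueAtoms P, fun q => ?_⟩
      exact ⟨fun ⟨_, hq, _⟩ => ⟨hq, List.not_mem_nil⟩, fun ⟨hq, _⟩ => ⟨some ⟨q, hq⟩, hq, rfl⟩⟩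
  | append_singleton l p ih =>
      obtain ⟨t, he, ht, hval⟩ := ih
      have hap : (delAction p).applies t := ht.point_atomless p
      refine ⟨t.update _ hap, ?_, ht.update_delAction hap, fun q => ?_⟩
      · rw [List.map_append]
        exact Exec.snoc _ he hap
      · rw [ht.exists_val_update_delAction_iff hap, hval]
        simp [and_assoc]

/-- correctness of the polynomial-time SAT reduction: a
propositional formula `φ` over atoms `P` is satisfiable iff the described
single-agent S5 planning instance (depth-1 preconditions, no postconditions)
has a plan; hence S5 plan existence is NP-hard. -/
theorem sat_reduces_to_s5_plan_existence (P : Finset ℕ) (φ : Form Unit)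
    (hprop : φ.IsProp) (hatoms : φ.atoms ⊆ P) :
    (∃ v : ℕ → Prop, propEval v φ) ↔
    (∃ (α : List (EpiAction Unit)) (t : EpiState Unit),
        (∀ a ∈ α, ∃ p ∈ P, a = delAction p) ∧
        Exec (satInit P) α t ∧ t.M.sat t.w (satTrans φ)) := by
  classical
  have htot : ∀ α t, (∀ a ∈ α, ∃ p ∈ P, a = delAction p) → Exec (satInit P) α t →
      ∀ x y, t.M.R () x y := by
    intro α t hα he
    refine he.rel_total (fun _ _ _ => trivial) (fun a ha => ?_) ()
    obtain ⟨p, -, rfl⟩ := hα a ha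
    exact fun _ _ _ => trivial
  constructor
  · rintro ⟨v, hv⟩
    obtain ⟨t, he, -, hval⟩ := exists_exec_delAction_satInit P (P.toList.filter (¬ v ·))
    have hα : ∀ a ∈ (P.toList.filter (¬ v ·)).map delAction, ∃ p ∈ P, a = delAction p := by
      simp only [List.mem_map, List.mem_filter, Finset.mem_toList]
      rintro a ⟨p, ⟨hp, -⟩, rfl⟩
      exact ⟨p, hp, rfl⟩
    refine ⟨_, t, hα, he, ?_⟩
    rw [t.M.sat_satTrans_iff (htot _ t hα he) hprop, propEval_congr φ (v' := v)]
    · exact hv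
    · intro q hq
      simp [hval, hatoms hq]
  · rintro ⟨α, t, hα, he, hsat⟩
    exact ⟨_, (t.M.sat_satTrans_iff (htot α t hα he) hprop t.w).1 hsat⟩
end
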